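/- arXiv:math/0405004 — 3 statements merged into one kernel-verified Lean document; each statement's English description precedes it below -/
import Mathlib

section
/- Let U ⊆ ℝ^n × ℝ^r be open and Γ a C¹ connection-coefficient family on U. Suppose ũ : U → ℝ^r is a C² map which satisfies the normal-coordinates equation at every point of U and whose fibre Jacobian is invertible at every point of U. Then all curvature components of Γ vanish identically on U: R^a_{μν}(p) = 0 for all a, all μ,ν and all p ∈ U. (Proposition 7.6: flatness is a necessary condition for the existence of coordinates normal on an open set.) -/
noncomputable section

/-- Points of `ℝⁿ × ℝʳ`: base coordinates and fibre coordinates. -/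
abbrev Pt (n r : ℕ) : Type := (Fin n → ℝ) × (Fin r → ℝ)

/-- Base partial derivative `∂f/∂x^μ` at `p`. -/
def pdx {n r : ℕ} (f : Pt n r → ℝ) (μ : Fin n) (p : Pt n r) : ℝ :=
  fderiv ℝ f p (Pi.single μ 1, 0)

/-- Fibre partial derivative `∂f/∂y^b` at `p`. -/
def pdy {n r : ℕ} (f : Pt n r → ℝ) (b : Fin r) (p : Pt n r) : ℝ :=
  fderiv ℝ f p (0, Pi.single b 1)

/-- Fibre Jacobian of a map `u : ℝⁿ × ℝʳ → ℝʳ` at `p`. -/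
def fibJac {n r : ℕ} (u : Pt n r → (Fin r → ℝ)) (p : Pt n r) :
    Matrix (Fin r) (Fin r) ℝ :=
  Matrix.of fun a b => pdy (fun q => u q a) b p

/-- The normal-coordinates equation at `p` for `u` w.r.t. the
connection-coefficient family `Γ` (indices: `Γ a μ = Γ^a_μ`). -/
def NormalEqAt {n r : ℕ} (Γ : Fin r → Fin n → Pt n r → ℝ)
    (u : Pt n r → (Fin r → ℝ)) (p : Pt n r) : Prop :=
  ∀ (a : Fin r) (μ : Fin n),
    (∑ b, pdy (fun q => u q a) b p * Γ b μ p) + pdx (fun q => u q a) μ p = 0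

/-- Curvature components `R^a_{μν}` of `Γ`. -/
def curv {n r : ℕ} (Γ : Fin r → Fin n → Pt n r → ℝ) (a : Fin r) (μ ν : Fin n)
    (p : Pt n r) : ℝ :=
  pdx (Γ a ν) μ p - pdx (Γ a μ) ν p
    + (∑ b, Γ b μ p * pdy (Γ a ν) b p) - ∑ b, Γ b ν p * pdy (Γ a μ) b p

/-- Fibre basis direction. -/
def eb {n r : ℕ} (b : Fin r) : Pt n r := (0, Pi.single b 1)

/-- Base basis direction. -/
def ex {n r : ℕ} (μ : Fin n) : Pt n r := (Pi.single μ 1, 0)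

/-- Horizontal lift direction at `p`. -/
def Xv {n r : ℕ} (Γ : Fin r → Fin n → Pt n r → ℝ) (p : Pt n r) (σ : Fin n) :
    Pt n r :=
  (Pi.single σ 1, fun b => Γ b σ p)

lemma clm_decomp {n r : ℕ} (L : Pt n r →L[ℝ] ℝ) (x : Fin n → ℝ) (y : Fin r → ℝ) :
    L (x, y) = L (x, 0) + ∑ b, y b * L (eb b) := by
  have hy : ((x, y) : Pt n r) = (x, (0 : Fin r → ℝ)) + ∑ b, y b • (eb b : Pt n r) := by
    rw [Prod.ext_iff]
    refine ⟨by simp [eb, Prod.fst_sum], ?_⟩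
    simp only [Prod.snd_add, Prod.snd_sum, Prod.smul_snd, eb]
    funext j
    simp [Pi.single_apply, Finset.sum_apply]
  rw [hy, map_add, map_sum]
  simp [smul_eq_mul]

lemma clm_decompX {n r : ℕ} (Γ : Fin r → Fin n → Pt n r → ℝ) (p : Pt n r)
    (L : Pt n r →L[ℝ] ℝ) (σ : Fin n) :
    L (Xv Γ p σ) = L (ex σ) + ∑ b, Γ b σ p * L (eb b) :=
  clm_decomp L (Pi.single σ 1) (fun b => Γ b σ p)

lemma hasFDerivAt_fderiv_apply {E : Type*} [NormedAddCommGroup E] [NormedSpace ℝ E]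
    {f : E → ℝ} {p : E} (hf : ContDiffAt ℝ 2 f p) (w : E) :
    HasFDerivAt (fun q => fderiv ℝ f q w)
      ((ContinuousLinearMap.apply ℝ ℝ w).comp (fderiv ℝ (fderiv ℝ f) p)) p := by
  have h1 : ContDiffAt ℝ 1 (fderiv ℝ f) p := hf.fderiv_right (by norm_num)
  have hd : DifferentiableAt ℝ (fderiv ℝ f) p := h1.differentiableAt one_ne_zero
  exact (ContinuousLinearMap.apply ℝ ℝ w).hasFDerivAt.comp p hd.hasFDerivAt

/-- **Proposition 7.6**: if `C²` coordinates normal on an open set `U` exist,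
then the connection is flat on `U` (all curvature components vanish on `U`). -/
theorem prop7_6 {n r : ℕ} (hn : 1 ≤ n) (hr : 1 ≤ r)
    (U : Set (Pt n r)) (hU : IsOpen U)
    (Γ : Fin r → Fin n → Pt n r → ℝ) (hΓ : ∀ a μ, ContDiffOn ℝ 1 (Γ a μ) U)
    (u : Pt n r → (Fin r → ℝ)) (hu : ContDiffOn ℝ 2 u U)
    (hne : ∀ p ∈ U, NormalEqAt Γ u p)
    (hinv : ∀ p ∈ U, IsUnit (fibJac u p)) :
    ∀ (a : Fin r) (μ ν : Fin n), ∀ p ∈ U, curv Γ a μ ν p = 0 := by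
  intro a μ ν p hp
  have hpU : U ∈ nhds p := hU.mem_nhds hp
  have hΓd : ∀ b ρ, DifferentiableAt ℝ (Γ b ρ) p := fun b ρ =>
    ((hΓ b ρ).contDiffAt hpU).differentiableAt one_ne_zero
  suffices hkey : ∀ c : Fin r, ∑ b, fibJac u p c b * curv Γ b μ ν p = 0 by
    have hvec : (fibJac u p).mulVec (fun b => curv Γ b μ ν p) = 0 := by
      funext c
      simpa [Matrix.mulVec, dotProduct] using hkey c
    obtain ⟨B, hB⟩ := (hinv p hp).exists_left_inv
    have hz : (fun b => curv Γ b μ ν p) = (0 : Fin r → ℝ) := by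
      calc (fun b => curv Γ b μ ν p)
          = (1 : Matrix (Fin r) (Fin r) ℝ).mulVec (fun b => curv Γ b μ ν p) := by
            simp
        _ = (B * fibJac u p).mulVec (fun b => curv Γ b μ ν p) := by rw [hB]
        _ = B.mulVec ((fibJac u p).mulVec (fun b => curv Γ b μ ν p)) := by
            rw [Matrix.mulVec_mulVec]
        _ = 0 := by rw [hvec]; simp
    exact congrFun hz a
  intro c
  -- the c-th component of u
  set f : Pt n r → ℝ := fun q => u q c with hfdef
  have hfC2 : ContDiffAt ℝ 2 f p := by
    have h0 : ContDiffAt ℝ 2 u p := hu.contDiffAt hpU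
    exact ((ContinuousLinearMap.proj (R := ℝ) (φ := fun _ : Fin r => ℝ)
      c).contDiff.contDiffAt).comp p h0
  set H := fderiv ℝ (fderiv ℝ f) p with hH
  have hsymm : ∀ v w, H v w = H w v := fun v w =>
    hfC2.isSymmSndFDerivAt (by simp) v w
  -- derivatives of the partial derivatives of f
  have hpdy : ∀ b : Fin r, HasFDerivAt (pdy f b)
      ((ContinuousLinearMap.apply ℝ ℝ (eb b)).comp H) p :=
    fun b => hasFDerivAt_fderiv_apply hfC2 (eb (n := n) b)
  have hpdx : ∀ ρ : Fin n, HasFDerivAt (pdx f ρ)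
      ((ContinuousLinearMap.apply ℝ ℝ (ex ρ)).comp H) p :=
    fun ρ => hasFDerivAt_fderiv_apply hfC2 (ex (r := r) ρ)
  -- the normal-coordinates expression and its derivative
  have hD : ∀ ρ : Fin n, HasFDerivAt
      (fun q => (∑ b, pdy f b q * Γ b ρ q) + pdx f ρ q)
      ((∑ b, (pdy f b p • fderiv ℝ (Γ b ρ) p
          + Γ b ρ p • ((ContinuousLinearMap.apply ℝ ℝ (eb b)).comp H)))
        + (ContinuousLinearMap.apply ℝ ℝ (ex ρ)).comp H) p := by
    intro ρ
    have := (HasFDerivAt.fun_sum (u := Finset.univ) fun b _ => (hpdy b).mul (hΓd b ρ).hasFDerivAt).add (hpdx ρ)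
    exact this
  have hzero : ∀ ρ : Fin n, HasFDerivAt
      (fun q => (∑ b, pdy f b q * Γ b ρ q) + pdx f ρ q) (0 : Pt n r →L[ℝ] ℝ) p := by
    intro ρ
    refine (hasFDerivAt_const (0 : ℝ) p).congr_of_eventuallyEq ?_
    filter_upwards [hpU] with q hq
    exact hne q hq c ρ
  have hEq : ∀ ρ σ : Fin n,
      (∑ b, pdy f b p * fderiv ℝ (Γ b ρ) p (Xv Γ p σ)) + H (Xv Γ p σ) (Xv Γ p ρ) = 0 := by
    intro ρ σ
    have hDeq := (hD ρ).unique (hzero ρ)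
    have h0 := DFunLike.congr_fun hDeq (Xv Γ p σ)
    simp only [ContinuousLinearMap.add_apply, ContinuousLinearMap.sum_apply,
      ContinuousLinearMap.smul_apply, ContinuousLinearMap.comp_apply,
      ContinuousLinearMap.apply_apply, ContinuousLinearMap.zero_apply,
      smul_eq_mul] at h0
    rw [clm_decompX Γ p (H (Xv Γ p σ)) ρ]
    rw [Finset.sum_add_distrib] at h0
    linarith [h0]
  have hcurv : ∀ b : Fin r, curv Γ b μ ν p
      = fderiv ℝ (Γ b ν) p (Xv Γ p μ) - fderiv ℝ (Γ b μ) p (Xv Γ p ν) := by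
    intro b
    rw [clm_decompX Γ p (fderiv ℝ (Γ b ν) p) μ, clm_decompX Γ p (fderiv ℝ (Γ b μ) p) ν]
    simp only [curv, pdx, pdy, eb, ex]
    ring
  have h1 := hEq ν μ
  have h2 := hEq μ ν
  have hfib : ∀ b, fibJac u p c b = pdy f b p := fun b => rfl
  calc ∑ b, fibJac u p c b * curv Γ b μ ν p
      = (∑ b, pdy f b p * fderiv ℝ (Γ b ν) p (Xv Γ p μ))
        - ∑ b, pdy f b p * fderiv ℝ (Γ b μ) p (Xv Γ p ν) := by
        rw [← Finset.sum_sub_distrib]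
        refine Finset.sum_congr rfl fun b _ => ?_
        rw [hfib b, hcurv b]; ring
    _ = 0 := by
        have hs := hsymm (Xv Γ p μ) (Xv Γ p ν)
        linarith [h1, h2]
end
end

section
/- Let V ⊆ ℝ^n × ℝ^r be open, Γ a C¹ connection-coefficient family on V, k an integer with 1 ≤ k ≤ n, J ⊆ ℝ^k open, and t₀ ∈ ℝ^{n−k} × ℝ^r with slab L(J,t₀) ⊆ V. Suppose ũ : V → ℝ^r is a C² map which satisfies the normal-coordinates equation at every point of L(J,t₀) and whose fibre Jacobian is invertible at every point of L(J,t₀). Then the map B : J → ℝ^{r×r} defined by B^a_b(s) := (∂ũ^a/∂y^b)((s,t₀)) is C¹, B(s) is an invertible matrix for every s ∈ J, and B satisfies system (A.2). (Proposition A.1, necessity direction.) -/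
noncomputable section

/-- The point `(s, t₀)` of the slab `L(J, t₀)`. -/
def slabPt {n r : ℕ} (k : ℕ) (t0x : Fin (n - k) → ℝ) (t0y : Fin r → ℝ)
    (s : Fin k → ℝ) : Pt n r :=
  (fun μ => if h : (μ : ℕ) < k then s ⟨(μ : ℕ), h⟩
            else t0x ⟨(μ : ℕ) - k, by have := μ.isLt; omega⟩,
   t0y)

/-- Partial derivative `∂f/∂s^α` on the parameter space `ℝᵏ`. -/
def pdk {k : ℕ} (f : (Fin k → ℝ) → ℝ) (α : Fin k) (s : Fin k → ℝ) : ℝ :=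
  fderiv ℝ f s (Pi.single α 1)

/-- System (A.2) for a matrix-valued map `B` on `J` (indices: `B s a b = B^a_b(s)`). -/
def SatA2 {n r k : ℕ} (hkn : k ≤ n) (Γ : Fin r → Fin n → Pt n r → ℝ)
    (t0x : Fin (n - k) → ℝ) (t0y : Fin r → ℝ) (J : Set (Fin k → ℝ))
    (B : (Fin k → ℝ) → Matrix (Fin r) (Fin r) ℝ) : Prop :=
  ∀ (a : Fin r) (α β : Fin k), ∀ s ∈ J,
    (∑ b, (pdx (Γ b (Fin.castLE hkn α)) (Fin.castLE hkn β) (slabPt k t0x t0y s)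
         - pdx (Γ b (Fin.castLE hkn β)) (Fin.castLE hkn α) (slabPt k t0x t0y s))
        * B s a b)
    + (∑ b, Γ b (Fin.castLE hkn α) (slabPt k t0x t0y s) * pdk (fun s' => B s' a b) β s)
    - (∑ b, Γ b (Fin.castLE hkn β) (slabPt k t0x t0y s) * pdk (fun s' => B s' a b) α s) = 0

namespace PropA1Aux

def slabL (n r k : ℕ) : (Fin k → ℝ) →L[ℝ] Pt n r :=
  LinearMap.toContinuousLinearMap
    { toFun := fun s => (fun μ => if h : (μ : ℕ) < k then s ⟨(μ : ℕ), h⟩ else 0, 0)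
      map_add' := by
        intro x y
        refine Prod.ext ?_ (by simp)
        funext μ
        by_cases h : (μ : ℕ) < k <;> simp [h]
      map_smul' := by
        intro c x
        refine Prod.ext ?_ (by simp)
        funext μ
        by_cases h : (μ : ℕ) < k <;> simp [h] }

@[simp] lemma slabL_apply (n r k : ℕ) (s : Fin k → ℝ) :
    slabL n r k s = ((fun μ => if h : (μ : ℕ) < k then s ⟨(μ : ℕ), h⟩ else 0 : Fin n → ℝ), (0 : Fin r → ℝ)) :=
  rfl

lemma slabL_single {n r k : ℕ} (hkn : k ≤ n) (β : Fin k) :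
    slabL n r k (Pi.single β 1) = ((Pi.single (Fin.castLE hkn β) 1 : Fin n → ℝ), (0 : Fin r → ℝ)) := by
  refine Prod.ext ?_ rfl
  funext μ
  by_cases h : (μ : ℕ) < k
  · have : ((slabL n r k) (Pi.single β 1)).1 μ = (Pi.single β 1 : Fin k → ℝ) ⟨(μ:ℕ), h⟩ := by
      rw [slabL_apply]; simp [h]
    rw [this]
    show _ = (Pi.single (Fin.castLE hkn β) 1 : Fin n → ℝ) μ
    rw [Pi.single_apply, Pi.single_apply]
    congr 1
    simp [Fin.ext_iff, eq_comm]
  · have : μ ≠ Fin.castLE hkn β := by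
      intro he
      apply h
      rw [he]
      simpa using β.isLt
    rw [slabL_apply]
    simp [h, Pi.single_apply, this]

lemma slabPt_eq {n r : ℕ} (k : ℕ) (t0x : Fin (n - k) → ℝ) (t0y : Fin r → ℝ) :
    slabPt (n := n) (r := r) k t0x t0y
      = fun s => slabL n r k s + slabPt k t0x t0y 0 := by
  funext s
  refine Prod.ext ?_ (by simp [slabPt, slabL_apply])
  funext μ
  by_cases h : (μ : ℕ) < k <;> simp [slabPt, slabL_apply, h]

lemma slab_hasFDerivAt {n r : ℕ} (k : ℕ) (t0x : Fin (n - k) → ℝ) (t0y : Fin r → ℝ)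
    (s : Fin k → ℝ) :
    HasFDerivAt (slabPt (n := n) (r := r) k t0x t0y) (slabL n r k) s := by
  rw [slabPt_eq]
  exact (slabL n r k).hasFDerivAt.add_const _

lemma slab_contDiff {n r : ℕ} (k : ℕ) (t0x : Fin (n - k) → ℝ) (t0y : Fin r → ℝ) :
    ContDiff ℝ 1 (slabPt (n := n) (r := r) k t0x t0y) := by
  rw [slabPt_eq]
  exact (slabL n r k).contDiff.add contDiff_const

end PropA1Aux

/-- **Proposition A.1** (necessity direction): if `ũ` is a `C²` solution of the
normal-coordinates equation along the slab `L(J,t₀)` with invertible fibre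
Jacobian there, then `B^a_b(s) := (∂ũ^a/∂y^b)((s,t₀))` is `C¹` on `J`,
invertible at each `s ∈ J`, and satisfies system (A.2). -/



theorem propA1_necessity {n r k : ℕ} (hn : 1 ≤ n) (hr : 1 ≤ r) (hk : 1 ≤ k)
    (hkn : k ≤ n)
    (V : Set (Pt n r)) (hV : IsOpen V)
    (Γ : Fin r → Fin n → Pt n r → ℝ) (hΓ : ∀ a μ, ContDiffOn ℝ 1 (Γ a μ) V)
    (J : Set (Fin k → ℝ)) (hJo : IsOpen J)
    (t0x : Fin (n - k) → ℝ) (t0y : Fin r → ℝ)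
    (hsub : ∀ s ∈ J, slabPt k t0x t0y s ∈ V)
    (u : Pt n r → (Fin r → ℝ)) (hu : ContDiffOn ℝ 2 u V)
    (hne : ∀ s ∈ J, NormalEqAt Γ u (slabPt k t0x t0y s))
    (hinv : ∀ s ∈ J, IsUnit (fibJac u (slabPt k t0x t0y s))) :
    (∀ (a b : Fin r),
        ContDiffOn ℝ 1 (fun s => fibJac u (slabPt k t0x t0y s) a b) J) ∧
    (∀ s ∈ J, IsUnit (fibJac u (slabPt k t0x t0y s))) ∧
    SatA2 hkn Γ t0x t0y J (fun s => fibJac u (slabPt k t0x t0y s)) := by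
  classical
  have hslab := PropA1Aux.slab_hasFDerivAt (n := n) (r := r) k t0x t0y
  have hicd := PropA1Aux.slab_contDiff (n := n) (r := r) k t0x t0y
  have hfa : ∀ a : Fin r, ContDiffOn ℝ 2 (fun q => u q a) V := fun a =>
    (ContinuousLinearMap.proj (R := ℝ) (φ := fun _ : Fin r => ℝ) a).contDiff.comp_contDiffOn hu
  have hB1 : ∀ (a b : Fin r),
      ContDiffOn ℝ 1 (fun s => fibJac u (slabPt k t0x t0y s) a b) J := by
    intro a b s hs
    have hpV : slabPt k t0x t0y s ∈ V := hsub s hs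
    have h1 : ContDiffAt ℝ 1 (fderiv ℝ (fun q => u q a)) (slabPt k t0x t0y s) :=
      ((hfa a).contDiffAt (hV.mem_nhds hpV)).fderiv_right (by norm_num)
    have h2 : ContDiffAt ℝ 1
        (fun p => fderiv ℝ (fun q => u q a) p ((0 : Fin n → ℝ), Pi.single b 1))
        (slabPt k t0x t0y s) := h1.clm_apply contDiffAt_const
    have h3 : ContDiffAt ℝ 1
        (fun s' => fderiv ℝ (fun q => u q a) (slabPt k t0x t0y s')
          ((0 : Fin n → ℝ), Pi.single b 1)) s := h2.comp s hicd.contDiffAt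
    exact h3.contDiffWithinAt
  refine ⟨hB1, hinv, ?_⟩
  intro a α β s hs
  have hpV : slabPt k t0x t0y s ∈ V := hsub s hs
  set p := slabPt k t0x t0y s with hp
  have hfc2 : ContDiffAt ℝ 2 (fun q => u q a) p := (hfa a).contDiffAt (hV.mem_nhds hpV)
  have hD2 : HasFDerivAt (fderiv ℝ (fun q => u q a))
      (fderiv ℝ (fderiv ℝ (fun q => u q a)) p) p :=
    ((hfc2.fderiv_right (m := 1) (by norm_num)).differentiableAt one_ne_zero).hasFDerivAt
  set D2 := fderiv ℝ (fderiv ℝ (fun q => u q a)) p with hD2def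
  have hsymm : ∀ v w : Pt n r, D2 v w = D2 w v := by
    intro v w
    refine second_derivative_symmetric_of_eventually (f := fun q => u q a) ?_ hD2 v w
    filter_upwards [hV.mem_nhds hpV] with q hq
    exact (((hfa a).differentiableOn (by norm_num)).differentiableAt
      (hV.mem_nhds hq)).hasFDerivAt
  have hP : ∀ v : Pt n r, HasFDerivAt
      (fun s' => fderiv ℝ (fun q => u q a) (slabPt k t0x t0y s') v)
      (((ContinuousLinearMap.apply ℝ ℝ v).comp D2).comp (PropA1Aux.slabL n r k)) s :=
    fun v => by
      have h := (((ContinuousLinearMap.apply ℝ ℝ v).hasFDerivAt.comp p hD2).comp s (hslab s))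
      exact h
  have hGfd : ∀ (b : Fin r) (μ : Fin n), HasFDerivAt
      (fun s' => Γ b μ (slabPt k t0x t0y s'))
      ((fderiv ℝ (Γ b μ) p).comp (PropA1Aux.slabL n r k)) s := fun b μ =>
    ((((hΓ b μ).differentiableOn one_ne_zero).differentiableAt
      (hV.mem_nhds hpV)).hasFDerivAt.comp s (hslab s))
  have hpdk : ∀ (b : Fin r) (γ : Fin k),
      pdk (fun s' => fibJac u (slabPt k t0x t0y s') a b) γ s
        = D2 ((Pi.single (Fin.castLE hkn γ) 1 : Fin n → ℝ), 0)
            ((0 : Fin n → ℝ), Pi.single b 1) := by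
    intro b γ
    have h := (hP ((0 : Fin n → ℝ), Pi.single b 1)).fderiv
    have h2 : pdk (fun s' => fibJac u (slabPt k t0x t0y s') a b) γ s
        = fderiv ℝ (fun s' => fderiv ℝ (fun q => u q a) (slabPt k t0x t0y s')
            ((0 : Fin n → ℝ), Pi.single b 1)) s (Pi.single γ 1) := rfl
    rw [h2, h]
    simp [PropA1Aux.slabL_single hkn]
  have key : ∀ (μ : Fin n) (γ : Fin k),
      (∑ b, (fderiv ℝ (fun q => u q a) p ((0 : Fin n → ℝ), Pi.single b 1)
           * fderiv ℝ (Γ b μ) p ((Pi.single (Fin.castLE hkn γ) 1 : Fin n → ℝ), 0)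
         + Γ b μ p * D2 ((Pi.single (Fin.castLE hkn γ) 1 : Fin n → ℝ), 0)
             ((0 : Fin n → ℝ), Pi.single b 1)))
        + D2 ((Pi.single (Fin.castLE hkn γ) 1 : Fin n → ℝ), 0)
            ((Pi.single μ 1 : Fin n → ℝ), 0) = 0 := by
    intro μ γ
    have hGder : HasFDerivAt
        (fun s' => (∑ b, fderiv ℝ (fun q => u q a) (slabPt k t0x t0y s')
              ((0 : Fin n → ℝ), Pi.single b 1) * Γ b μ (slabPt k t0x t0y s'))
          + fderiv ℝ (fun q => u q a) (slabPt k t0x t0y s')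
              ((Pi.single μ 1 : Fin n → ℝ), 0))
        ((∑ b, ((fderiv ℝ (fun q => u q a) p ((0 : Fin n → ℝ), Pi.single b 1))
              • ((fderiv ℝ (Γ b μ) p).comp (PropA1Aux.slabL n r k))
            + (Γ b μ p) • (((ContinuousLinearMap.apply ℝ ℝ
                ((0 : Fin n → ℝ), Pi.single b 1)).comp D2).comp (PropA1Aux.slabL n r k))))
          + ((ContinuousLinearMap.apply ℝ ℝ ((Pi.single μ 1 : Fin n → ℝ), 0)).comp
              D2).comp (PropA1Aux.slabL n r k)) s := by
      refine HasFDerivAt.add (HasFDerivAt.fun_sum fun b _ => ?_) (hP _)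
      exact (hP _).mul (hGfd b μ)
    have hGz : fderiv ℝ
        (fun s' => (∑ b, fderiv ℝ (fun q => u q a) (slabPt k t0x t0y s')
              ((0 : Fin n → ℝ), Pi.single b 1) * Γ b μ (slabPt k t0x t0y s'))
          + fderiv ℝ (fun q => u q a) (slabPt k t0x t0y s')
              ((Pi.single μ 1 : Fin n → ℝ), 0)) s = 0 := by
      have hev : (fun s' => (∑ b, fderiv ℝ (fun q => u q a) (slabPt k t0x t0y s')
              ((0 : Fin n → ℝ), Pi.single b 1) * Γ b μ (slabPt k t0x t0y s'))
          + fderiv ℝ (fun q => u q a) (slabPt k t0x t0y s')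
              ((Pi.single μ 1 : Fin n → ℝ), 0)) =ᶠ[nhds s] (fun _ => (0 : ℝ)) := by
        filter_upwards [hJo.mem_nhds hs] with t ht
        exact hne t ht a μ
      rw [hev.fderiv_eq]
      exact fderiv_const_apply 0
    have hDz := hGder.fderiv.symm.trans hGz
    have hval := congrArg (fun (L : (Fin k → ℝ) →L[ℝ] ℝ) => L (Pi.single γ 1)) hDz
    simpa [ContinuousLinearMap.sum_apply, PropA1Aux.slabL_single hkn] using hval
  -- final assembly
  show (∑ b, (pdx (Γ b (Fin.castLE hkn α)) (Fin.castLE hkn β) p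
         - pdx (Γ b (Fin.castLE hkn β)) (Fin.castLE hkn α) p) * fibJac u p a b)
    + (∑ b, Γ b (Fin.castLE hkn α) p * pdk (fun s' => fibJac u (slabPt k t0x t0y s') a b) β s)
    - (∑ b, Γ b (Fin.castLE hkn β) p * pdk (fun s' => fibJac u (slabPt k t0x t0y s') a b) α s) = 0
  simp only [hpdk]
  simp only [pdx, fibJac, Matrix.of_apply, pdy]
  have h1 := key (Fin.castLE hkn α) β
  have h2 := key (Fin.castLE hkn β) α
  rw [Finset.sum_add_distrib] at h1 h2
  have hsy := hsymm ((Pi.single (Fin.castLE hkn β) 1 : Fin n → ℝ), 0)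
    ((Pi.single (Fin.castLE hkn α) 1 : Fin n → ℝ), 0)
  have e1 : (∑ b, (fderiv ℝ (Γ b (Fin.castLE hkn α)) p
        ((Pi.single (Fin.castLE hkn β) 1 : Fin n → ℝ), 0)
      - fderiv ℝ (Γ b (Fin.castLE hkn β)) p
        ((Pi.single (Fin.castLE hkn α) 1 : Fin n → ℝ), 0))
      * fderiv ℝ (fun q => u q a) p ((0 : Fin n → ℝ), Pi.single b 1))
    = (∑ b, fderiv ℝ (fun q => u q a) p ((0 : Fin n → ℝ), Pi.single b 1)
        * fderiv ℝ (Γ b (Fin.castLE hkn α)) p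
          ((Pi.single (Fin.castLE hkn β) 1 : Fin n → ℝ), 0))
      - (∑ b, fderiv ℝ (fun q => u q a) p ((0 : Fin n → ℝ), Pi.single b 1)
        * fderiv ℝ (Γ b (Fin.castLE hkn β)) p
          ((Pi.single (Fin.castLE hkn α) 1 : Fin n → ℝ), 0)) := by
    rw [← Finset.sum_sub_distrib]
    exact Finset.sum_congr rfl fun b _ => by ring
  rw [e1]
  linarith [h1, h2, hsy]
end
end

section
/- Let V ⊆ ℝ^n × ℝ^r be open, Γ a C¹ connection-coefficient family on V, k an integer with 1 ≤ k ≤ n, J ⊆ ℝ^k open and convex, and t₀ ∈ ℝ^{n−k} × ℝ^r with slab L(J,t₀) ⊆ V. Suppose there exists a C¹ map B : J → ℝ^{r×r} satisfying system (A.2) such that B(s) is invertible for every s ∈ J. Then there exist an open set W with L(J,t₀) ⊆ W ⊆ V and a C¹ map ũ : W → ℝ^r which satisfies the normal-coordinates equation at every point of L(J,t₀) and whose fibre Jacobian at the point (s,t₀) equals B(s) (in particular is invertible) for every s ∈ J. (Proposition A.1, sufficiency direction.) -/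
noncomputable section

open Metric MeasureTheory Set

set_option maxHeartbeats 1000000

/-- Symmetry of a family of linear functionals from closedness. -/
lemma sym_of_closed {k : ℕ} (W : Fin k → ((Fin k → ℝ) →L[ℝ] ℝ))
    (hcl : ∀ α β : Fin k, W α (Pi.single β 1) = W β (Pi.single α 1))
    (v w : Fin k → ℝ) :
    ∑ α, W α v * w α = ∑ α, W α w * v α := by
  have expand : ∀ (L : (Fin k → ℝ) →L[ℝ] ℝ) (x : Fin k → ℝ),
      L x = ∑ β, x β * L (Pi.single β 1) := by
    intro L x
    have hx : x = ∑ β, x β • (Pi.single β 1 : Fin k → ℝ) := by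
      funext j
      simp [Finset.sum_apply, Pi.single_apply, Finset.sum_ite_eq, mul_comm]
    calc L x = L (∑ β, x β • (Pi.single β 1 : Fin k → ℝ)) := by rw [← hx]
    _ = ∑ β, x β * L (Pi.single β 1) := by
        rw [map_sum]; simp [smul_eq_mul]
  calc ∑ α, W α v * w α = ∑ α, (∑ β, v β * W α (Pi.single β 1)) * w α := by
        simp_rw [← expand]
    _ = ∑ α, ∑ β, v β * W β (Pi.single α 1) * w α := by
        refine Finset.sum_congr rfl fun α _ => ?_
        rw [Finset.sum_mul]
        exact Finset.sum_congr rfl fun β _ => by rw [hcl α β, mul_assoc]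
    _ = ∑ β, (∑ α, w α * W β (Pi.single α 1)) * v β := by
        rw [Finset.sum_comm]
        refine Finset.sum_congr rfl fun β _ => ?_
        rw [Finset.sum_mul]
        exact Finset.sum_congr rfl fun α _ => by ring
    _ = ∑ α, W α w * v α := by simp_rw [← expand]

lemma poincare1 {k : ℕ} {J : Set (Fin k → ℝ)} (hJo : IsOpen J) (hJcx : Convex ℝ J)
    {x₀ : Fin k → ℝ} (hx₀ : x₀ ∈ J) (ω : (Fin k → ℝ) → (Fin k → ℝ))
    (hω : ∀ α, ContDiffOn ℝ 1 (fun s => ω s α) J)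
    (hcl : ∀ α β, ∀ s ∈ J, fderiv ℝ (fun y => ω y α) s (Pi.single β 1)
        = fderiv ℝ (fun y => ω y β) s (Pi.single α 1)) :
    ∃ f : (Fin k → ℝ) → ℝ, ∀ s ∈ J,
      HasFDerivAt f (∑ α, ω s α • (ContinuousLinearMap.proj α : (Fin k → ℝ) →L[ℝ] ℝ)) s := by
  classical
  set W : Fin k → (Fin k → ℝ) → ((Fin k → ℝ) →L[ℝ] ℝ) := fun α x => fderiv ℝ (fun y => ω y α) x with hW
  have hdiff : ∀ α, ∀ x ∈ J, HasFDerivAt (fun y => ω y α) (W α x) x := by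
    intro α x hx
    exact (((hω α).differentiableOn one_ne_zero).differentiableAt (hJo.mem_nhds hx)).hasFDerivAt
  have hWc : ∀ α, ContinuousOn (W α) J := fun α =>
    (hω α).continuousOn_fderiv_of_isOpen hJo le_rfl
  -- the curve
  set γ : (Fin k → ℝ) → ℝ → (Fin k → ℝ) := fun s t => x₀ + t • (s - x₀) with hγdef
  set φ : (Fin k → ℝ) → ℝ → ℝ := fun s t => ∑ α, ω (γ s t) α * (s α - x₀ α) with hφdef
  refine ⟨fun s => ∫ t in (0:ℝ)..1, φ s t, ?_⟩
  intro s₁ hs₁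
  -- compact neighbourhood of the segment
  have hseg : segment ℝ x₀ s₁ ⊆ J := hJcx.segment_subset hx₀ hs₁
  have hsegc : IsCompact (segment ℝ x₀ s₁) := by
    rw [segment_eq_image ℝ x₀ s₁]
    exact isCompact_Icc.image (by continuity)
  obtain ⟨δ, δpos, hδ⟩ := hsegc.exists_thickening_subset_open hJo hseg
  set K : Set (Fin k → ℝ) := cthickening (δ/2) (segment ℝ x₀ s₁) with hKdef
  have hK : IsCompact K := hsegc.cthickening
  have hKJ : K ⊆ J :=
    (cthickening_subset_thickening' δpos (by linarith) _).trans hδ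
  have hKne : x₀ ∈ K := self_subset_cthickening _ (left_mem_segment ℝ x₀ s₁)
  have hmem : ∀ s ∈ ball s₁ (δ/2), ∀ t ∈ Icc (0:ℝ) 1, γ s t ∈ K := by
    intro s hs t ht
    have hseg' : γ s₁ t ∈ segment ℝ x₀ s₁ :=
      ⟨1 - t, t, by linarith [ht.2], ht.1, by ring, by
        show (1-t) • x₀ + t • s₁ = x₀ + t • (s₁ - x₀); module⟩
    refine mem_cthickening_of_dist_le _ _ _ _ hseg' ?_
    have : γ s t - γ s₁ t = t • (s - s₁) := by
      show (x₀ + t • (s - x₀)) - (x₀ + t • (s₁ - x₀)) = t • (s - s₁); module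
    rw [dist_eq_norm, this, norm_smul]
    have h1 : ‖s - s₁‖ ≤ δ/2 := le_of_lt (by simpa [dist_eq_norm] using hs)
    have h2 : |t| ≤ 1 := by rw [abs_of_nonneg ht.1]; exact ht.2
    calc |t| * ‖s - s₁‖ ≤ 1 * (δ/2) :=
      mul_le_mul h2 h1 (norm_nonneg _) zero_le_one
    _ = δ/2 := one_mul _
  -- bounds on K
  have hωc : ContinuousOn (fun x => ω x) J := by
    rw [continuousOn_pi]; exact fun α => (hω α).continuousOn
  obtain ⟨C0, hC0⟩ := hK.exists_bound_of_continuousOn (hωc.mono hKJ)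
  have hWvec : ContinuousOn (fun x => (fun α => W α x)) K := by
    rw [continuousOn_pi]; exact fun α => (hWc α).mono hKJ
  obtain ⟨C1, hC1⟩ := hK.exists_bound_of_continuousOn hWvec
  have hC0' : ∀ x ∈ K, ∀ α, |ω x α| ≤ C0 := fun x hx α =>
    le_trans (norm_le_pi_norm (ω x) α) (hC0 x hx)
  have hC1' : ∀ x ∈ K, ∀ α, ‖W α x‖ ≤ C1 := fun x hx α =>
    le_trans (norm_le_pi_norm (fun α => W α x) α) (hC1 x hx)
  have hC0nn : 0 ≤ C0 := le_trans (norm_nonneg _) (hC0 x₀ hKne)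
  have hC1nn : 0 ≤ C1 := le_trans (norm_nonneg _) (hC1 x₀ hKne)
  set A : ℝ := ‖s₁ - x₀‖ + δ/2 with hAdef
  have hAnn : 0 ≤ A := by positivity
  have hcoord : ∀ s ∈ ball s₁ (δ/2), ∀ α : Fin k, |s α - x₀ α| ≤ A := by
    intro s hs α
    have h1 : s - x₀ = (s - s₁) + (s₁ - x₀) := by abel
    have h2 : ‖s - s₁‖ < δ/2 := mem_ball_iff_norm.mp hs
    calc |s α - x₀ α| = |(s - x₀) α| := by simp
    _ ≤ ‖s - x₀‖ := norm_le_pi_norm (s - x₀) α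
    _ ≤ ‖s - s₁‖ + ‖s₁ - x₀‖ := by rw [h1]; exact norm_add_le _ _
    _ ≤ A := by rw [hAdef]; linarith
  -- the candidate derivative under the integral
  set F' : (Fin k → ℝ) → ℝ → ((Fin k → ℝ) →L[ℝ] ℝ) := fun s t =>
    ∑ α, (ω (γ s t) α • (ContinuousLinearMap.proj α : (Fin k → ℝ) →L[ℝ] ℝ)
      + (s α - x₀ α) • (t • W α (γ s t))) with hF'def
  have hγcont : ∀ s, Continuous (fun t => γ s t) := by
    intro s; exact continuous_const.add (continuous_id.smul continuous_const)
  have hγscont : ∀ t : ℝ, Continuous (fun s => γ s t) := by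
    intro t
    exact continuous_const.add (continuous_const.fun_smul (continuous_id.sub continuous_const))
  have hδ2 : (0:ℝ) < δ/2 := by linarith
  have hs₁ball : s₁ ∈ ball s₁ (δ/2) := mem_ball_self hδ2
  have hφcont : ∀ s ∈ ball s₁ (δ/2), ContinuousOn (fun t => φ s t) (Icc (0:ℝ) 1) := by
    intro s hs
    apply continuousOn_finset_sum
    intro α _
    refine ContinuousOn.mul ?_ continuousOn_const
    exact ((hω α).continuousOn.comp (hγcont s).continuousOn (fun t ht => hKJ (hmem s hs t ht)))
  have hIsub : uIoc (0:ℝ) 1 ⊆ Icc (0:ℝ) 1 := by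
    rw [uIoc_of_le (zero_le_one)]; exact Ioc_subset_Icc_self
  have hF'cont : ContinuousOn (fun t => F' s₁ t) (Icc (0:ℝ) 1) := by
    apply continuousOn_finset_sum
    intro α _
    apply ContinuousOn.add
    · exact ContinuousOn.smul ((hω α).continuousOn.comp (hγcont s₁).continuousOn
        (fun t ht => hKJ (hmem s₁ hs₁ball t ht))) continuousOn_const
    · exact ContinuousOn.fun_smul continuousOn_const (ContinuousOn.fun_smul continuousOn_id
        ((hWc α).comp (hγcont s₁).continuousOn (fun t ht => hKJ (hmem s₁ hs₁ball t ht))))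
  have hdiffs : ∀ t ∈ uIoc (0:ℝ) 1, ∀ s ∈ ball s₁ (δ/2),
      HasFDerivAt (fun s' => φ s' t) (F' s t) s := by
    intro t ht s hs
    have hγJ : γ s t ∈ J := hKJ (hmem s hs t (hIsub ht))
    have hγd : HasFDerivAt (fun s' => γ s' t)
        (t • (ContinuousLinearMap.id ℝ (Fin k → ℝ))) s := by
      have : HasFDerivAt (fun s' : Fin k → ℝ => x₀ + t • (s' - x₀))
          (t • (ContinuousLinearMap.id ℝ (Fin k → ℝ))) s :=
        (((hasFDerivAt_id s).sub_const x₀).const_smul t).const_add x₀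
      exact this
    apply HasFDerivAt.fun_sum
    intro α _
    have h1 : HasFDerivAt (fun s' => ω (γ s' t) α) (t • W α (γ s t)) s := by
      have := ((hdiff α _ hγJ).comp s hγd)
      refine this.congr_fderiv ?_
      ext v
      simp [ContinuousLinearMap.comp_apply, ContinuousLinearMap.map_smul]
    have h2' : HasFDerivAt (fun s' : Fin k → ℝ => s' α)
        ((ContinuousLinearMap.proj α : (Fin k → ℝ) →L[ℝ] ℝ)) s :=
      (ContinuousLinearMap.proj α : (Fin k → ℝ) →L[ℝ] ℝ).hasFDerivAt
    have h2 : HasFDerivAt (fun s' : Fin k → ℝ => s' α - x₀ α)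
        ((ContinuousLinearMap.proj α : (Fin k → ℝ) →L[ℝ] ℝ)) s :=
      h2'.sub_const (x₀ α)
    exact h1.mul h2
  have hbound : ∀ t ∈ uIoc (0:ℝ) 1, ∀ s ∈ ball s₁ (δ/2),
      ‖F' s t‖ ≤ (Finset.univ : Finset (Fin k)).card * (C0 + A * C1) := by
    intro t ht s hs
    have htI : t ∈ Icc (0:ℝ) 1 := hIsub ht
    have hγK : γ s t ∈ K := hmem s hs t htI
    calc ‖F' s t‖ ≤ ∑ α : Fin k, ‖ω (γ s t) α • (ContinuousLinearMap.proj α : (Fin k → ℝ) →L[ℝ] ℝ)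
        + (s α - x₀ α) • (t • W α (γ s t))‖ := norm_sum_le _ _
    _ ≤ ∑ α : Fin k, (C0 + A * C1) := by
        apply Finset.sum_le_sum
        intro α _
        refine (norm_add_le _ _).trans (add_le_add ?_ ?_)
        · refine (norm_smul_le (ω (γ s t) α)
            (ContinuousLinearMap.proj α : (Fin k → ℝ) →L[ℝ] ℝ)).trans ?_
          have hp : ‖(ContinuousLinearMap.proj α : (Fin k → ℝ) →L[ℝ] ℝ)‖ ≤ 1 := by
            apply ContinuousLinearMap.opNorm_le_bound _ zero_le_one
            intro v; rw [one_mul]; exact norm_le_pi_norm v α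
          calc ‖ω (γ s t) α‖ * ‖(ContinuousLinearMap.proj α : (Fin k → ℝ) →L[ℝ] ℝ)‖
              ≤ C0 * 1 := mul_le_mul (hC0' _ hγK α) hp (norm_nonneg _) hC0nn
          _ = C0 := mul_one _
        · refine (norm_smul_le (s α - x₀ α) (t • W α (γ s t))).trans ?_
          refine le_trans (mul_le_mul_of_nonneg_left
            (norm_smul_le t (W α (γ s t))) (norm_nonneg _)) ?_
          have h1 : ‖s α - x₀ α‖ ≤ A := hcoord s hs α
          have h2 : ‖W α (γ s t)‖ ≤ C1 := hC1' _ hγK α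
          have h3 : ‖t‖ ≤ 1 := by rw [Real.norm_eq_abs, abs_of_nonneg htI.1]; exact htI.2
          calc ‖s α - x₀ α‖ * (‖t‖ * ‖W α (γ s t)‖) ≤ A * (1 * C1) := by
                apply mul_le_mul h1 ?_ (by positivity) hAnn
                exact mul_le_mul h3 h2 (norm_nonneg _) zero_le_one
          _ = A * C1 := by ring
    _ = (Finset.univ : Finset (Fin k)).card * (C0 + A * C1) := by
        rw [Finset.sum_const, nsmul_eq_mul]
  have key : HasFDerivAt (fun s => ∫ t in (0:ℝ)..1, φ s t)
      (∫ t in (0:ℝ)..1, F' s₁ t) s₁ := by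
    apply intervalIntegral.hasFDerivAt_integral_of_dominated_of_fderiv_le
      (F' := F') (ball_mem_nhds s₁ hδ2)
    · filter_upwards [ball_mem_nhds s₁ hδ2] with s hs
      exact ((hφcont s hs).mono hIsub).aestronglyMeasurable measurableSet_uIoc
    · apply ContinuousOn.intervalIntegrable
      rw [uIcc_of_le zero_le_one]
      exact hφcont s₁ hs₁ball
    · exact ((hF'cont.mono hIsub)).aestronglyMeasurable measurableSet_uIoc
    · exact MeasureTheory.ae_of_all _ (fun t ht s hs => hbound t ht s hs)
    · exact intervalIntegrable_const
    · exact MeasureTheory.ae_of_all _ (fun t ht s hs => hdiffs t ht s hs)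
  -- identify the derivative with the 1-form at s₁ via FTC
  have hF'int : IntervalIntegrable (fun t => F' s₁ t) volume 0 1 :=
    ContinuousOn.intervalIntegrable (by rwa [uIcc_of_le zero_le_one])
  have hid : (∫ t in (0:ℝ)..1, F' s₁ t)
      = ∑ α, ω s₁ α • (ContinuousLinearMap.proj α : (Fin k → ℝ) →L[ℝ] ℝ) := by
    apply ContinuousLinearMap.ext
    intro v
    rw [ContinuousLinearMap.intervalIntegral_apply hF'int v]
    set ψ : ℝ → ℝ := fun t => t * ∑ α, ω (γ s₁ t) α * v α with hψdef
    have hψd : ∀ t ∈ Icc (0:ℝ) 1, HasDerivAt ψ (F' s₁ t v) t := by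
      intro t ht
      have hγJ : γ s₁ t ∈ J := hKJ (hmem s₁ hs₁ball t ht)
      have hγd : HasDerivAt (fun t' => γ s₁ t') (s₁ - x₀) t := by
        have : HasDerivAt (fun t' : ℝ => x₀ + t' • (s₁ - x₀)) ((1:ℝ) • (s₁ - x₀)) t :=
          ((hasDerivAt_id t).smul_const (s₁ - x₀)).const_add x₀
        simpa only [one_smul] using this
      have hsum : HasDerivAt (fun t' => ∑ α, ω (γ s₁ t') α * v α)
          (∑ α, W α (γ s₁ t) (s₁ - x₀) * v α) t := by
        apply HasDerivAt.fun_sum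
        intro α _
        exact ((hdiff α _ hγJ).comp_hasDerivAt t hγd).mul_const (v α)
      have hψd' : HasDerivAt ψ
          (1 * (∑ α, ω (γ s₁ t) α * v α) + t * (∑ α, W α (γ s₁ t) (s₁ - x₀) * v α)) t :=
        (hasDerivAt_id t).mul hsum
      convert hψd' using 1
      have hsym : ∑ α, W α (γ s₁ t) v * (s₁ - x₀) α
          = ∑ α, W α (γ s₁ t) (s₁ - x₀) * v α :=
        sym_of_closed (fun α => W α (γ s₁ t)) (fun α β => hcl α β _ hγJ) v (s₁ - x₀)
      simp only [hF'def, ContinuousLinearMap.sum_apply, ContinuousLinearMap.add_apply,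
        ContinuousLinearMap.smul_apply, ContinuousLinearMap.proj_apply,
        ContinuousLinearMap.coe_smul', Pi.smul_apply, smul_eq_mul]
      rw [Finset.sum_add_distrib, one_mul]
      congr 1
      have e1 : ∑ x : Fin k, (s₁ x - x₀ x) * (t * (W x (γ s₁ t)) v)
          = t * ∑ x : Fin k, (W x (γ s₁ t)) v * (s₁ - x₀) x := by
        rw [Finset.mul_sum]
        exact Finset.sum_congr rfl fun i _ => by simp only [Pi.sub_apply]; ring
      rw [e1, hsym, Finset.mul_sum]
    have hψint : IntervalIntegrable (fun t => F' s₁ t v) volume 0 1 := by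
      apply ContinuousOn.intervalIntegrable
      rw [uIcc_of_le zero_le_one]
      exact ContinuousOn.clm_apply hF'cont continuousOn_const
    have hFTC := intervalIntegral.integral_eq_sub_of_hasDerivAt
      (fun t ht => hψd t (by rwa [uIcc_of_le zero_le_one] at ht)) hψint
    rw [hFTC]
    have hγ1 : γ s₁ 1 = s₁ := by
      show x₀ + (1:ℝ) • (s₁ - x₀) = s₁; module
    simp only [hψdef, hγ1, one_mul, zero_mul, sub_zero]
    simp [ContinuousLinearMap.sum_apply]
  rw [hid] at key
  exact key

section MainProof

open ContinuousLinearMap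

variable {n r k : ℕ}

/-- projection onto the first `k` base coordinates -/
def piL (hkn : k ≤ n) : Pt n r →L[ℝ] (Fin k → ℝ) :=
  ContinuousLinearMap.pi fun α =>
    (ContinuousLinearMap.proj (Fin.castLE hkn α)).comp (ContinuousLinearMap.fst ℝ _ _)

lemma piL_apply (hkn : k ≤ n) (q : Pt n r) (α : Fin k) :
    piL hkn q α = q.1 (Fin.castLE hkn α) := rfl

lemma piL_slab (hkn : k ≤ n) (t0x : Fin (n - k) → ℝ) (t0y : Fin r → ℝ)
    (s : Fin k → ℝ) : piL (r := r) hkn (slabPt k t0x t0y s) = s := by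
  funext α
  rw [piL_apply]
  show (if h : ((Fin.castLE hkn α : Fin n) : ℕ) < k then s ⟨_, h⟩ else t0x _) = s α
  rw [dif_pos (by simpa using α.isLt)]
  exact congrArg s (Fin.ext (by simp))

/-- the linear part of the affine map `s ↦ slabPt k t0x t0y s` -/
def lamL (hkn : k ≤ n) : (Fin k → ℝ) →L[ℝ] Pt n r :=
  (ContinuousLinearMap.pi fun μ : Fin n =>
    if h : (μ : ℕ) < k then (ContinuousLinearMap.proj ⟨(μ : ℕ), h⟩ : ((Fin k → ℝ) →L[ℝ] ℝ))
    else 0).prod 0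

lemma slab_eq (hkn : k ≤ n) (t0x : Fin (n - k) → ℝ) (t0y : Fin r → ℝ) :
    (fun s => slabPt k t0x t0y s) = fun s : Fin k → ℝ =>
      lamL (r := r) hkn s + slabPt k t0x t0y 0 := by
  funext s
  rw [Prod.ext_iff]
  constructor
  · show (fun μ : Fin n => if h : (μ:ℕ) < k then s ⟨μ, h⟩
        else t0x ⟨(μ:ℕ) - k, by have := μ.isLt; omega⟩)
      = (lamL (r := r) hkn s).1 + (slabPt (n := n) k t0x t0y 0).1
    funext μ
    rw [Pi.add_apply]
    have hl : (lamL (r := r) hkn s).1 μ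
        = if h : (μ:ℕ) < k then s ⟨μ, h⟩ else 0 := by
      show (if h : (μ:ℕ) < k then (ContinuousLinearMap.proj ⟨(μ:ℕ), h⟩ :
          ((Fin k → ℝ) →L[ℝ] ℝ)) else 0) s = _
      by_cases h : (μ:ℕ) < k <;> simp [h]
    have hr : (slabPt (n := n) k t0x t0y 0).1 μ
        = if h : (μ:ℕ) < k then 0 else t0x ⟨(μ:ℕ) - k, by have := μ.isLt; omega⟩ := by
      show (if h : (μ:ℕ) < k then (0 : Fin k → ℝ) ⟨μ, h⟩
          else t0x ⟨(μ:ℕ) - k, by have := μ.isLt; omega⟩) = _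
      by_cases h : (μ:ℕ) < k <;> simp [h]
    rw [hl, hr]
    by_cases h : (μ:ℕ) < k <;> simp [h]
  · show t0y = (lamL (r := r) hkn s).2 + (slabPt (n := n) k t0x t0y 0).2
    show t0y = 0 + t0y
    rw [zero_add]

lemma slab_hasFDerivAt (hkn : k ≤ n) (t0x : Fin (n - k) → ℝ) (t0y : Fin r → ℝ)
    (s : Fin k → ℝ) :
    HasFDerivAt (fun s' => slabPt (n := n) k t0x t0y s') (lamL (r := r) hkn) s := by
  rw [slab_eq hkn t0x t0y]
  exact (lamL (r := r) hkn).hasFDerivAt.add_const _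

lemma slab_contDiff (hkn : k ≤ n) (t0x : Fin (n - k) → ℝ) (t0y : Fin r → ℝ) :
    ContDiff ℝ 1 (fun s => slabPt (n := n) k t0x t0y s) := by
  rw [slab_eq hkn t0x t0y]
  exact ((lamL (r := r) hkn).contDiff).add contDiff_const

lemma lamL_single (hkn : k ≤ n) (β : Fin k) :
    lamL (r := r) hkn (Pi.single β 1) = (Pi.single (Fin.castLE hkn β) 1, 0) := by
  rw [Prod.ext_iff]
  refine ⟨?_, rfl⟩
  funext μ
  show (if h : (μ:ℕ) < k then (ContinuousLinearMap.proj ⟨(μ:ℕ), h⟩ :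
      ((Fin k → ℝ) →L[ℝ] ℝ)) else 0) (Pi.single β 1)
    = (Pi.single (Fin.castLE hkn β) 1 : Fin n → ℝ) μ
  by_cases h : (μ:ℕ) < k
  · rw [dif_pos h]
    show (Pi.single β 1 : Fin k → ℝ) ⟨μ, h⟩ = (Pi.single (Fin.castLE hkn β) 1 : Fin n → ℝ) μ
    rw [Pi.single_apply, Pi.single_apply]
    congr 1
    simp [Fin.ext_iff]
  · rw [dif_neg h]
    rw [Pi.single_apply, if_neg (by simp [Fin.ext_iff]; omega)]
    rfl

end MainProof

/-- **Proposition A.1** (sufficiency direction): if there is a `C¹` invertible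
matrix-valued solution `B` of system (A.2) on `J`, then on a neighbourhood `W`
of the slab `L(J,t₀)` there is a `C¹` map `ũ` satisfying the normal-coordinates
equation along the slab, whose fibre Jacobian at `(s,t₀)` equals `B(s)`. -/
theorem propA1_sufficiency {n r k : ℕ} (hn : 1 ≤ n) (hr : 1 ≤ r) (hk : 1 ≤ k)
    (hkn : k ≤ n)
    (V : Set (Pt n r)) (hV : IsOpen V)
    (Γ : Fin r → Fin n → Pt n r → ℝ) (hΓ : ∀ a μ, ContDiffOn ℝ 1 (Γ a μ) V)
    (J : Set (Fin k → ℝ)) (hJo : IsOpen J) (hJcx : Convex ℝ J)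
    (t0x : Fin (n - k) → ℝ) (t0y : Fin r → ℝ)
    (hsub : ∀ s ∈ J, slabPt k t0x t0y s ∈ V)
    (B : (Fin k → ℝ) → Matrix (Fin r) (Fin r) ℝ)
    (hB : ∀ a b, ContDiffOn ℝ 1 (fun s => B s a b) J)
    (hBinv : ∀ s ∈ J, IsUnit (B s))
    (hBA2 : SatA2 hkn Γ t0x t0y J B) :
    ∃ W : Set (Pt n r), IsOpen W ∧ (∀ s ∈ J, slabPt k t0x t0y s ∈ W) ∧ W ⊆ V ∧
      ∃ u : Pt n r → (Fin r → ℝ), ContDiffOn ℝ 1 u W ∧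
        ∀ s ∈ J, NormalEqAt Γ u (slabPt k t0x t0y s) ∧
          (∀ a b, fibJac u (slabPt k t0x t0y s) a b = B s a b) := by
  classical
  rcases J.eq_empty_or_nonempty with hJe | ⟨x₀, hx₀⟩
  · refine ⟨∅, isOpen_empty, by simp [hJe], empty_subset V, fun _ => 0, ?_, by simp [hJe]⟩
    intro q hq; exact absurd hq (Set.notMem_empty q)
  -- basic differentiability facts
  have hdiffat : ∀ (g : (Fin k → ℝ) → ℝ), ContDiffOn ℝ 1 g J →
      ∀ s ∈ J, HasFDerivAt g (fderiv ℝ g s) s := fun g hg s hs =>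
    ((hg.differentiableOn one_ne_zero).differentiableAt (hJo.mem_nhds hs)).hasFDerivAt
  have hΓdiff : ∀ (b : Fin r) (μ : Fin n) (p : Pt n r), p ∈ V →
      HasFDerivAt (Γ b μ) (fderiv ℝ (Γ b μ) p) p := fun b μ p hp =>
    (((hΓ b μ).differentiableOn one_ne_zero).differentiableAt (hV.mem_nhds hp)).hasFDerivAt
  -- the coefficients G
  set G : (Fin k → ℝ) → Fin r → Fin n → ℝ :=
    fun s a μ => -∑ b, B s a b * Γ b μ (slabPt k t0x t0y s) with hGdef
  have hΓsc : ∀ (b : Fin r) (μ : Fin n),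
      ContDiffOn ℝ 1 (fun s => Γ b μ (slabPt k t0x t0y s)) J := fun b μ =>
    (hΓ b μ).comp (slab_contDiff hkn t0x t0y).contDiffOn (fun s hs => hsub s hs)
  have hGc : ∀ (a : Fin r) (μ : Fin n), ContDiffOn ℝ 1 (fun s => G s a μ) J := fun a μ =>
    (ContDiffOn.sum fun b _ => (hB a b).mul (hΓsc b μ)).neg
  -- derivative formula for G
  have hGfd : ∀ (a : Fin r) (μ : Fin n), ∀ s ∈ J, ∀ β : Fin k,
      pdk (fun s' => G s' a μ) β s
        = -∑ b, (B s a b * pdx (Γ b μ) (Fin.castLE hkn β) (slabPt k t0x t0y s)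
            + Γ b μ (slabPt k t0x t0y s) * pdk (fun s' => B s' a b) β s) := by
    intro a μ s hs β
    have hterm : ∀ b : Fin r, HasFDerivAt (fun s' => B s' a b * Γ b μ (slabPt k t0x t0y s'))
        (B s a b • ((fderiv ℝ (Γ b μ) (slabPt k t0x t0y s)).comp (lamL (r := r) hkn))
          + Γ b μ (slabPt k t0x t0y s) • fderiv ℝ (fun s' => B s' a b) s) s := by
      intro b
      have h1 : HasFDerivAt (fun s' => B s' a b) (fderiv ℝ (fun s' => B s' a b) s) s :=
        hdiffat _ (hB a b) s hs
      have h2 : HasFDerivAt (fun s' => Γ b μ (slabPt k t0x t0y s'))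
          ((fderiv ℝ (Γ b μ) (slabPt k t0x t0y s)).comp (lamL (r := r) hkn)) s :=
        (hΓdiff b μ _ (hsub s hs)).comp s (slab_hasFDerivAt hkn t0x t0y s)
      exact h1.mul h2
    have hG : HasFDerivAt (fun s' => G s' a μ)
        (-∑ b, (B s a b • ((fderiv ℝ (Γ b μ) (slabPt k t0x t0y s)).comp (lamL (r := r) hkn))
          + Γ b μ (slabPt k t0x t0y s) • fderiv ℝ (fun s' => B s' a b) s)) s :=
      (HasFDerivAt.fun_sum (fun b (_ : b ∈ Finset.univ) => hterm b)).neg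
    show fderiv ℝ (fun s' => G s' a μ) s (Pi.single β 1) = _
    rw [hG.fderiv]
    rw [ContinuousLinearMap.neg_apply, ContinuousLinearMap.sum_apply, neg_inj]
    refine Finset.sum_congr rfl fun b _ => ?_
    rw [ContinuousLinearMap.add_apply, ContinuousLinearMap.smul_apply,
      ContinuousLinearMap.smul_apply, ContinuousLinearMap.comp_apply, lamL_single,
      smul_eq_mul, smul_eq_mul]
    rfl
  -- closedness of the 1-forms, from system (A.2)
  have hclosed : ∀ (a : Fin r) (α β : Fin k), ∀ s ∈ J,
      fderiv ℝ (fun s' => G s' a (Fin.castLE hkn α)) s (Pi.single β 1)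
        = fderiv ℝ (fun s' => G s' a (Fin.castLE hkn β)) s (Pi.single α 1) := by
    intro a α β s hs
    have h1 := hGfd a (Fin.castLE hkn α) s hs β
    have h2 := hGfd a (Fin.castLE hkn β) s hs α
    have h3 := hBA2 a α β s hs
    show pdk (fun s' => G s' a (Fin.castLE hkn α)) β s
      = pdk (fun s' => G s' a (Fin.castLE hkn β)) α s
    rw [h1, h2, neg_inj, ← sub_eq_zero, ← Finset.sum_sub_distrib]
    have h3' : ∑ b, ((pdx (Γ b (Fin.castLE hkn α)) (Fin.castLE hkn β) (slabPt k t0x t0y s)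
          - pdx (Γ b (Fin.castLE hkn β)) (Fin.castLE hkn α) (slabPt k t0x t0y s))
            * B s a b
        + Γ b (Fin.castLE hkn α) (slabPt k t0x t0y s) * pdk (fun s' => B s' a b) β s
        - Γ b (Fin.castLE hkn β) (slabPt k t0x t0y s) * pdk (fun s' => B s' a b) α s) = 0 := by
      rw [Finset.sum_sub_distrib, Finset.sum_add_distrib]
      exact h3
    rw [← h3']
    refine Finset.sum_congr rfl fun b _ => ?_
    ring
  -- potentials via the Poincaré lemma
  have hpoin : ∀ a : Fin r, ∃ f : (Fin k → ℝ) → ℝ, ∀ s ∈ J,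
      HasFDerivAt f (∑ α, G s a (Fin.castLE hkn α) •
        (ContinuousLinearMap.proj α : (Fin k → ℝ) →L[ℝ] ℝ)) s := fun a =>
    poincare1 hJo hJcx hx₀ (fun s α => G s a (Fin.castLE hkn α))
      (fun α => hGc a (Fin.castLE hkn α)) (fun α β s hs => hclosed a α β s hs)
  choose f hf using hpoin
  have hfc : ∀ a, ContDiffOn ℝ 1 (f a) J := by
    intro a
    have h01 : (1 : WithTop ℕ∞) = 0 + 1 := by norm_num
    rw [h01, contDiffOn_succ_iff_fderiv_of_isOpen hJo]
    refine ⟨fun s hs => (hf a s hs).differentiableAt.differentiableWithinAt, by simp, ?_⟩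
    rw [contDiffOn_zero]
    have hLcont : ContinuousOn (fun s => ∑ α, G s a (Fin.castLE hkn α) •
        (ContinuousLinearMap.proj α : (Fin k → ℝ) →L[ℝ] ℝ)) J :=
      continuousOn_finset_sum _ fun α _ => ((hGc a _).continuousOn).smul continuousOn_const
    exact hLcont.congr (fun s hs => (hf a s hs).fderiv)
  -- the open set W and the map u
  refine ⟨V ∩ (fun q : Pt n r => piL (r := r) hkn q) ⁻¹' J,
    hV.inter (hJo.preimage (piL (r := r) hkn).continuous),
    fun s hs => ⟨hsub s hs, by
      show piL (r := r) hkn (slabPt k t0x t0y s) ∈ J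
      rw [piL_slab]; exact hs⟩,
    Set.inter_subset_left, ?_⟩
  refine ⟨fun q a =>
    f a (piL (r := r) hkn q)
      + (∑ b, B (piL (r := r) hkn q) a b * (q.2 b - t0y b))
      + ∑ μ : Fin n, (if h : k ≤ (μ:ℕ) then
          G (piL (r := r) hkn q) a μ
            * (q.1 μ - t0x ⟨(μ:ℕ) - k, by have := μ.isLt; omega⟩)
          else 0), ?_, ?_⟩
  · -- C¹ smoothness of u on W
    rw [contDiffOn_pi]
    intro a
    have hπ : ∀ q : Pt n r, q ∈ V ∩ (fun q : Pt n r => piL (r := r) hkn q) ⁻¹' J →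
        piL (r := r) hkn q ∈ J := fun q hq => hq.2
    refine ContDiffOn.add (ContDiffOn.add ?_ ?_) ?_
    · exact (hfc a).comp ((piL (r := r) hkn).contDiff.contDiffOn) hπ
    · refine ContDiffOn.sum fun b _ => ?_
      refine ((hB a b).comp ((piL (r := r) hkn).contDiff.contDiffOn) hπ).mul ?_
      refine ContDiff.contDiffOn ?_
      exact (((ContinuousLinearMap.proj b).comp
        (ContinuousLinearMap.snd ℝ (Fin n → ℝ) (Fin r → ℝ))).contDiff).sub contDiff_const
    · refine ContDiffOn.sum fun μ _ => ?_
      by_cases h : k ≤ (μ:ℕ)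
      · simp only [dif_pos h]
        refine ((hGc a μ).comp ((piL (r := r) hkn).contDiff.contDiffOn) hπ).mul ?_
        refine ContDiff.contDiffOn ?_
        exact (((ContinuousLinearMap.proj μ).comp
          (ContinuousLinearMap.fst ℝ (Fin n → ℝ) (Fin r → ℝ))).contDiff).sub contDiff_const
      · simp only [dif_neg h]
        exact contDiffOn_const
  · -- the equations along the slab
    intro s hs
    have hps : piL (r := r) hkn (slabPt k t0x t0y s) = s := piL_slab hkn t0x t0y s
    set p : Pt n r := slabPt k t0x t0y s with hpdef
    set Pb : Fin r → (Pt n r →L[ℝ] ℝ) := fun b => (ContinuousLinearMap.proj b).comp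
      (ContinuousLinearMap.snd ℝ (Fin n → ℝ) (Fin r → ℝ)) with hPbdef
    set Qm : Fin n → (Pt n r →L[ℝ] ℝ) := fun μ => (ContinuousLinearMap.proj μ).comp
      (ContinuousLinearMap.fst ℝ (Fin n → ℝ) (Fin r → ℝ)) with hQmdef
    have hDa : ∀ a : Fin r, HasFDerivAt (fun q => f a (piL (r := r) hkn q)
          + (∑ b, B (piL (r := r) hkn q) a b * (q.2 b - t0y b))
          + ∑ μ : Fin n, (if h : k ≤ (μ:ℕ) then
              G (piL (r := r) hkn q) a μ
                * (q.1 μ - t0x ⟨(μ:ℕ) - k, by have := μ.isLt; omega⟩)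
              else 0))
        ((∑ α, G s a (Fin.castLE hkn α) •
            (ContinuousLinearMap.proj α : (Fin k → ℝ) →L[ℝ] ℝ)).comp (piL (r := r) hkn)
          + ∑ b, B s a b • Pb b
          + ∑ μ : Fin n, (if k ≤ (μ:ℕ) then G s a μ • Qm μ else 0)) p := by
      intro a
      have h0 : HasFDerivAt (f a) (∑ α, G s a (Fin.castLE hkn α) •
          (ContinuousLinearMap.proj α : (Fin k → ℝ) →L[ℝ] ℝ)) (piL (r := r) hkn p) := by
        rw [hps]; exact hf a s hs
      have hpart1 : HasFDerivAt (fun q => f a (piL (r := r) hkn q))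
          ((∑ α, G s a (Fin.castLE hkn α) •
            (ContinuousLinearMap.proj α : (Fin k → ℝ) →L[ℝ] ℝ)).comp (piL (r := r) hkn)) p :=
        h0.comp p (piL (r := r) hkn).hasFDerivAt
      have hpart2 : ∀ b : Fin r, HasFDerivAt
          (fun q : Pt n r => B (piL (r := r) hkn q) a b * (q.2 b - t0y b))
          (B s a b • Pb b) p := by
        intro b
        have h1 : HasFDerivAt (fun s' => B s' a b)
            (fderiv ℝ (fun s' => B s' a b) s) (piL (r := r) hkn p) := by
          rw [hps]; exact hdiffat _ (hB a b) s hs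
        have h1' : HasFDerivAt (fun q : Pt n r => B (piL (r := r) hkn q) a b)
            ((fderiv ℝ (fun s' => B s' a b) s).comp (piL (r := r) hkn)) p :=
          h1.comp p (piL (r := r) hkn).hasFDerivAt
        have h2' : HasFDerivAt (fun q : Pt n r => q.2 b) (Pb b) p := (Pb b).hasFDerivAt
        have h2 : HasFDerivAt (fun q : Pt n r => q.2 b - t0y b) (Pb b) p :=
          h2'.sub_const (t0y b)
        have := h1'.mul h2
        rw [show p.2 b - t0y b = (0:ℝ) from sub_self (t0y b), zero_smul, add_zero, hps] at this
        exact this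
      have hpart3 : ∀ μ : Fin n, HasFDerivAt
          (fun q : Pt n r => (if h : k ≤ (μ:ℕ) then
              G (piL (r := r) hkn q) a μ
                * (q.1 μ - t0x ⟨(μ:ℕ) - k, by have := μ.isLt; omega⟩)
              else 0))
          (if k ≤ (μ:ℕ) then G s a μ • Qm μ else 0) p := by
        intro μ
        by_cases h : k ≤ (μ:ℕ)
        · simp only [dif_pos h, if_pos h]
          have h1 : HasFDerivAt (fun s' => G s' a μ)
              (fderiv ℝ (fun s' => G s' a μ) s) (piL (r := r) hkn p) := by
            rw [hps]; exact hdiffat _ (hGc a μ) s hs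
          have h1' : HasFDerivAt (fun q : Pt n r => G (piL (r := r) hkn q) a μ)
              ((fderiv ℝ (fun s' => G s' a μ) s).comp (piL (r := r) hkn)) p :=
            h1.comp p (piL (r := r) hkn).hasFDerivAt
          have h2' : HasFDerivAt (fun q : Pt n r => q.1 μ) (Qm μ) p := (Qm μ).hasFDerivAt
          have h2 : HasFDerivAt (fun q : Pt n r =>
              q.1 μ - t0x ⟨(μ:ℕ) - k, by have := μ.isLt; omega⟩) (Qm μ) p :=
            h2'.sub_const _
          have := h1'.mul h2
          have hz : p.1 μ - t0x ⟨(μ:ℕ) - k, by have := μ.isLt; omega⟩ = 0 := by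
            have : p.1 μ = t0x ⟨(μ:ℕ) - k, by have := μ.isLt; omega⟩ := by
              show (if hh : (μ:ℕ) < k then s ⟨(μ:ℕ), hh⟩
                else t0x ⟨(μ:ℕ) - k, by have := μ.isLt; omega⟩) = _
              rw [dif_neg (by omega)]
            rw [this, sub_self]
          rw [hz, zero_smul, add_zero, hps] at this
          exact this
        · simp only [dif_neg h, if_neg h]
          exact hasFDerivAt_const 0 p
      exact (hpart1.fun_add (HasFDerivAt.fun_sum fun b _ => hpart2 b)).fun_add
        (HasFDerivAt.fun_sum fun μ _ => hpart3 μ)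
    -- evaluate the derivative on the coordinate directions
    have hpdy : ∀ (a b : Fin r),
        pdy (fun q => f a (piL (r := r) hkn q)
          + (∑ b, B (piL (r := r) hkn q) a b * (q.2 b - t0y b))
          + ∑ μ : Fin n, (if h : k ≤ (μ:ℕ) then
              G (piL (r := r) hkn q) a μ
                * (q.1 μ - t0x ⟨(μ:ℕ) - k, by have := μ.isLt; omega⟩)
              else 0)) b p = B s a b := by
      intro a b
      rw [pdy, (hDa a).fderiv]
      rw [ContinuousLinearMap.add_apply, ContinuousLinearMap.add_apply,
        ContinuousLinearMap.comp_apply]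
      have e1 : piL (r := r) hkn ((0 : Fin n → ℝ), Pi.single b 1) = 0 := by
        funext α; rfl
      rw [e1, map_zero]
      have e2 : ∀ b' : Fin r, (Pb b') ((0 : Fin n → ℝ), Pi.single b 1)
          = (Pi.single b 1 : Fin r → ℝ) b' := fun b' => rfl
      have e3 : ∀ μ : Fin n, (Qm μ) ((0 : Fin n → ℝ), Pi.single b 1) = 0 := fun μ => rfl
      rw [ContinuousLinearMap.sum_apply, ContinuousLinearMap.sum_apply]
      have e4 : ∑ μ : Fin n, ((if k ≤ (μ:ℕ) then G s a μ • Qm μ else 0) :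
          Pt n r →L[ℝ] ℝ) ((0 : Fin n → ℝ), Pi.single b 1) = 0 := by
        refine Finset.sum_eq_zero fun μ _ => ?_
        rw [apply_ite (fun (L : Pt n r →L[ℝ] ℝ) => L ((0 : Fin n → ℝ), Pi.single b 1))]
        rw [ContinuousLinearMap.smul_apply, e3, smul_zero, ContinuousLinearMap.zero_apply,
          ite_self]
      rw [e4, add_zero, zero_add]
      simp only [ContinuousLinearMap.smul_apply, e2, smul_eq_mul, Pi.single_apply,
        mul_ite, mul_one, mul_zero]
      rw [Finset.sum_ite_eq' Finset.univ b (fun b' => B s a b')]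
      simp
    have hpdx : ∀ (a : Fin r) (μ : Fin n),
        pdx (fun q => f a (piL (r := r) hkn q)
          + (∑ b, B (piL (r := r) hkn q) a b * (q.2 b - t0y b))
          + ∑ μ : Fin n, (if h : k ≤ (μ:ℕ) then
              G (piL (r := r) hkn q) a μ
                * (q.1 μ - t0x ⟨(μ:ℕ) - k, by have := μ.isLt; omega⟩)
              else 0)) μ p = G s a μ := by
      intro a μ
      rw [pdx, (hDa a).fderiv]
      rw [ContinuousLinearMap.add_apply, ContinuousLinearMap.add_apply,
        ContinuousLinearMap.comp_apply]
      have e2 : ∀ b' : Fin r, (Pb b') ((Pi.single μ 1 : Fin n → ℝ), (0 : Fin r → ℝ))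
          = 0 := fun b' => rfl
      have e3 : ∀ μ' : Fin n, (Qm μ') ((Pi.single μ 1 : Fin n → ℝ), (0 : Fin r → ℝ))
          = (Pi.single μ 1 : Fin n → ℝ) μ' := fun μ' => rfl
      rw [ContinuousLinearMap.sum_apply, ContinuousLinearMap.sum_apply]
      have e5 : ∑ b : Fin r, ((B s a b • Pb b : Pt n r →L[ℝ] ℝ))
          ((Pi.single μ 1 : Fin n → ℝ), (0 : Fin r → ℝ)) = 0 := by
        refine Finset.sum_eq_zero fun b _ => ?_
        rw [ContinuousLinearMap.smul_apply, e2, smul_zero]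
      rw [e5, add_zero]
      rw [ContinuousLinearMap.sum_apply]
      have e6 : ∑ μ' : Fin n, ((if k ≤ (μ':ℕ) then G s a μ' • Qm μ' else 0) :
          Pt n r →L[ℝ] ℝ) ((Pi.single μ 1 : Fin n → ℝ), (0 : Fin r → ℝ))
          = if k ≤ (μ:ℕ) then G s a μ else 0 := by
        rw [Finset.sum_eq_single μ]
        · rw [apply_ite (fun (L : Pt n r →L[ℝ] ℝ) =>
            L ((Pi.single μ 1 : Fin n → ℝ), (0 : Fin r → ℝ)))]
          rw [ContinuousLinearMap.smul_apply, e3, ContinuousLinearMap.zero_apply]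
          simp
        · intro μ' _ hne
          rw [apply_ite (fun (L : Pt n r →L[ℝ] ℝ) =>
            L ((Pi.single μ 1 : Fin n → ℝ), (0 : Fin r → ℝ)))]
          rw [ContinuousLinearMap.smul_apply, e3, ContinuousLinearMap.zero_apply]
          rw [Pi.single_apply, if_neg hne, smul_zero, ite_self]
        · intro h; exact absurd (Finset.mem_univ μ) h
      rw [e6]
      have e7 : piL (r := r) hkn ((Pi.single μ 1 : Fin n → ℝ), (0 : Fin r → ℝ))
          = if h : (μ:ℕ) < k then (Pi.single ⟨(μ:ℕ), h⟩ 1 : Fin k → ℝ) else 0 := by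
        by_cases h : (μ:ℕ) < k
        · rw [dif_pos h]
          funext α
          show (Pi.single μ 1 : Fin n → ℝ) (Fin.castLE hkn α) = _
          rw [Pi.single_apply, Pi.single_apply]
          congr 1
          simp [Fin.ext_iff]
        · rw [dif_neg h]
          funext α
          show (Pi.single μ 1 : Fin n → ℝ) (Fin.castLE hkn α) = 0
          rw [Pi.single_apply, if_neg (by simp [Fin.ext_iff]; omega)]
      rw [e7]
      by_cases h : (μ:ℕ) < k
      · rw [dif_pos h, if_neg (by omega), add_zero]
        simp only [ContinuousLinearMap.smul_apply, ContinuousLinearMap.proj_apply,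
          smul_eq_mul, Pi.single_apply, mul_ite, mul_one, mul_zero]
        rw [Finset.sum_ite_eq' Finset.univ (⟨(μ:ℕ), h⟩ : Fin k)
          (fun α => G s a (Fin.castLE hkn α))]
        simp only [Finset.mem_univ, if_true]
        congr 1
      · rw [dif_neg h, if_pos (by omega)]
        simp only [ContinuousLinearMap.smul_apply, ContinuousLinearMap.proj_apply,
          Pi.zero_apply, smul_eq_mul, mul_zero, Finset.sum_const_zero, zero_add]
    refine ⟨?_, ?_⟩
    · intro a μ
      rw [hpdx a μ]
      have : ∀ b, pdy (fun q => f a (piL (r := r) hkn q)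
          + (∑ b, B (piL (r := r) hkn q) a b * (q.2 b - t0y b))
          + ∑ μ : Fin n, (if h : k ≤ (μ:ℕ) then
              G (piL (r := r) hkn q) a μ
                * (q.1 μ - t0x ⟨(μ:ℕ) - k, by have := μ.isLt; omega⟩)
              else 0)) b p * Γ b μ p = B s a b * Γ b μ p := fun b => by rw [hpdy a b]
      rw [Finset.sum_congr rfl fun b _ => this b]
      show (∑ b, B s a b * Γ b μ p) + (-∑ b, B s a b * Γ b μ p) = 0
      exact add_neg_cancel _
    · intro a b
      show pdy _ b p = B s a b
      exact hpdy a b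
end
end
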